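/- Let x_max > 0, let p : [0, x_max] → ℝ be continuous and nonnegative, and let c : [0, x_max] → [0, x_max] be continuously differentiable with c′(x) > 0 on [0, x_max], c(0) = 0, and c(x_max) = x_max. Then ∫₀^{x_max} p(x)/(c′(x))² dx ≥ (1/x_max²) · (∫₀^{x_max} p(x)^{1/3} dx)³. In particular, Bennett's granular distortion (x_max²/(3N²))·2·∫₀^{x_max} p(x)/(c′(x))² dx is at least (2/(3N²))·(∫₀^{x_max} p(x)^{1/3} dx)³ for every admissible compressor c. -/

import Mathlib

open Real MeasureTheory intervalIntegral

/-! Factor `p ^ (1/3) = (p / c' ^ 2) ^ (1/3) * c' ^ (2/3)` and apply Hölder's inequality with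
exponents `3` and `3/2`; by the fundamental theorem of calculus the second factor contributes
`∫ c' = c xmax - c 0 = xmax`. -/

section
variable {α : Type*} [MeasurableSpace α] {μ : Measure α}

theorem memLp_ofReal_of_integrable_rpow {F : α → ℝ} {r : ℝ} (hr : 0 < r) (hF : 0 ≤ᵐ[μ] F)
    (hFm : AEStronglyMeasurable F μ) (hint : Integrable (fun x ↦ F x ^ r) μ) :
    MemLp F (ENNReal.ofReal r) μ := by
  rw [← integrable_norm_rpow_iff hFm (by simpa using hr) ENNReal.ofReal_ne_top,
    ENNReal.toReal_ofReal hr.le]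
  refine hint.congr ?_
  filter_upwards [hF] with x hx
  rw [Real.norm_of_nonneg hx]

theorem integral_rpow_one_third_pow_three_le_mul_sq {f g : α → ℝ} (hf : 0 ≤ᵐ[μ] f)
    (hg : ∀ᵐ x ∂μ, 0 < g x) (hfg : Integrable (fun x ↦ f x / g x ^ 2) μ)
    (hg_int : Integrable g μ) :
    (∫ x, f x ^ (1 / 3 : ℝ) ∂μ) ^ 3 ≤ (∫ x, f x / g x ^ 2 ∂μ) * (∫ x, g x ∂μ) ^ 2 := by
  set F : α → ℝ := fun x ↦ (f x / g x ^ 2) ^ (1 / 3 : ℝ)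
  set G : α → ℝ := fun x ↦ g x ^ (2 / 3 : ℝ)
  have hF : 0 ≤ᵐ[μ] F := by
    filter_upwards [hf, hg] with x (hfx : 0 ≤ f x) hgx
    exact rpow_nonneg (by positivity) _
  have hG : 0 ≤ᵐ[μ] G := by
    filter_upwards [hg] with x hgx
    exact rpow_nonneg hgx.le _
  have hF_cube : (fun x ↦ F x ^ (3 : ℝ)) =ᵐ[μ] fun x ↦ f x / g x ^ 2 := by
    filter_upwards [hf, hg] with x (hfx : 0 ≤ f x) hgx
    rw [← rpow_mul (by positivity)]
    norm_num
  have hG_pow : (fun x ↦ G x ^ (3 / 2 : ℝ)) =ᵐ[μ] g := by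
    filter_upwards [hg] with x hgx
    rw [← rpow_mul hgx.le]
    norm_num
  have hFG : (fun x ↦ F x * G x) =ᵐ[μ] fun x ↦ f x ^ (1 / 3 : ℝ) := by
    filter_upwards [hf, hg] with x (hfx : 0 ≤ f x) hgx
    dsimp only [F, G]
    rw [div_rpow hfx (by positivity), ← rpow_natCast, ← rpow_mul hgx.le]
    norm_num
    exact div_mul_cancel₀ _ (by positivity)
  have hF_mem : MemLp F (ENNReal.ofReal 3) μ :=
    memLp_ofReal_of_integrable_rpow (by norm_num) hF
      (hfg.aestronglyMeasurable.aemeasurable.pow_const _).aestronglyMeasurable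
      (hfg.congr hF_cube.symm)
  have hG_mem : MemLp G (ENNReal.ofReal (3 / 2)) μ :=
    memLp_ofReal_of_integrable_rpow (by norm_num) hG
      (hg_int.aestronglyMeasurable.aemeasurable.pow_const _).aestronglyMeasurable
      (hg_int.congr hG_pow.symm)
  have holder := integral_mul_le_Lp_mul_Lq_of_nonneg
    (Real.holderConjugate_iff.mpr ⟨by norm_num, by norm_num⟩) hF hG hF_mem hG_mem
  rw [integral_congr_ae hFG, integral_congr_ae hF_cube, integral_congr_ae hG_pow] at holder
  have hI : 0 ≤ ∫ x, f x / g x ^ 2 ∂μ := integral_nonneg_of_ae <| by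
    filter_upwards [hf, hg] with x (hfx : 0 ≤ f x) hgx
    positivity
  have hK : 0 ≤ ∫ x, g x ∂μ := integral_nonneg_of_ae <| by
    filter_upwards [hg] with x hgx
    exact hgx.le
  have hJ : 0 ≤ ∫ x, f x ^ (1 / 3 : ℝ) ∂μ := integral_nonneg_of_ae <| by
    filter_upwards [hf] with x (hfx : 0 ≤ f x)
    exact rpow_nonneg hfx _
  calc (∫ x, f x ^ (1 / 3 : ℝ) ∂μ) ^ 3
      ≤ ((∫ x, f x / g x ^ 2 ∂μ) ^ (1 / 3 : ℝ) * (∫ x, g x ∂μ) ^ (1 / (3 / 2) : ℝ)) ^ 3 :=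
        pow_le_pow_left₀ hJ holder 3
    _ = (∫ x, f x / g x ^ 2 ∂μ) * (∫ x, g x ∂μ) ^ 2 := by
        rw [mul_pow, ← rpow_natCast, ← rpow_natCast, ← rpow_mul hI, ← rpow_mul hK,
          ← rpow_natCast (∫ x, g x ∂μ)]
        norm_num

end

theorem intervalIntegral.integral_rpow_one_third_pow_three_le_mul_sq {f g : ℝ → ℝ} {a b : ℝ}
    (hab : a ≤ b) (hf : ∀ x ∈ Set.Ioc a b, 0 ≤ f x) (hg : ∀ x ∈ Set.Ioc a b, 0 < g x)
    (hfg : IntervalIntegrable (fun x ↦ f x / g x ^ 2) volume a b)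
    (hg_int : IntervalIntegrable g volume a b) :
    (∫ x in a..b, f x ^ (1 / 3 : ℝ)) ^ 3 ≤
      (∫ x in a..b, f x / g x ^ 2) * (∫ x in a..b, g x) ^ 2 := by
  simp only [integral_of_le hab]
  exact _root_.integral_rpow_one_third_pow_three_le_mul_sq
    (ae_restrict_of_forall_mem measurableSet_Ioc hf)
    (ae_restrict_of_forall_mem measurableSet_Ioc hg) hfg.1 hg_int.1

theorem optimal_compressor_minimizes_bennett_general (xmax : ℝ) (hxmax : 0 < xmax)
    (p : ℝ → ℝ) (hpcont : ContinuousOn p (Set.Icc 0 xmax))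
    (hpnn : ∀ x ∈ Set.Icc (0:ℝ) xmax, 0 ≤ p x)
    (c c' : ℝ → ℝ)
    (hderiv : ∀ x ∈ Set.Icc (0:ℝ) xmax, HasDerivAt c (c' x) x)
    (hc'cont : ContinuousOn c' (Set.Icc 0 xmax))
    (hc'pos : ∀ x ∈ Set.Icc (0:ℝ) xmax, 0 < c' x)
    (hc0 : c 0 = 0) (hcmax : c xmax = xmax) :
    (∫ x in (0:ℝ)..xmax, p x / (c' x) ^ 2) ≥
        (1 / xmax ^ 2) * (∫ x in (0:ℝ)..xmax, (p x) ^ ((1:ℝ)/3)) ^ 3 ∧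
    ∀ N : ℕ, 0 < N →
      (xmax ^ 2 / (3 * (N:ℝ) ^ 2)) * (2 * ∫ x in (0:ℝ)..xmax, p x / (c' x) ^ 2) ≥
        (2 / (3 * (N:ℝ) ^ 2)) * (∫ x in (0:ℝ)..xmax, (p x) ^ ((1:ℝ)/3)) ^ 3 := by
  have hIcc : Set.uIcc 0 xmax = Set.Icc 0 xmax := Set.uIcc_of_le hxmax.le
  have hc'_integral : ∫ x in (0:ℝ)..xmax, c' x = xmax := by
    rw [integral_eq_sub_of_hasDerivAt (hIcc ▸ hderiv) (hc'cont.intervalIntegrable_of_Icc hxmax.le),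
      hcmax, hc0, sub_zero]
  have key : (∫ x in (0:ℝ)..xmax, p x ^ ((1:ℝ) / 3)) ^ 3 ≤
      (∫ x in (0:ℝ)..xmax, p x / c' x ^ 2) * xmax ^ 2 := by
    have := integral_rpow_one_third_pow_three_le_mul_sq hxmax.le
      (fun x hx ↦ hpnn x (Set.Ioc_subset_Icc_self hx))
      (fun x hx ↦ hc'pos x (Set.Ioc_subset_Icc_self hx))
      ((hpcont.div (hc'cont.pow 2) fun x hx ↦ (pow_pos (hc'pos x hx) 2).ne').intervalIntegrable_of_Icc
        hxmax.le)
      (hc'cont.intervalIntegrable_of_Icc hxmax.le)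
    rwa [hc'_integral] at this
  have bound : (1 / xmax ^ 2) * (∫ x in (0:ℝ)..xmax, p x ^ ((1:ℝ) / 3)) ^ 3 ≤
      ∫ x in (0:ℝ)..xmax, p x / c' x ^ 2 := by
    rw [one_div, inv_mul_le_iff₀ (by positivity)]
    linarith
  refine ⟨bound, fun N _ ↦ ?_⟩
  calc (2 / (3 * (N:ℝ) ^ 2)) * (∫ x in (0:ℝ)..xmax, p x ^ ((1:ℝ) / 3)) ^ 3
      = (2 * xmax ^ 2 / (3 * (N:ℝ) ^ 2)) *
          ((1 / xmax ^ 2) * (∫ x in (0:ℝ)..xmax, p x ^ ((1:ℝ) / 3)) ^ 3) := by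
        field_simp
    _ ≤ (2 * xmax ^ 2 / (3 * (N:ℝ) ^ 2)) * ∫ x in (0:ℝ)..xmax, p x / c' x ^ 2 := by gcongr
    _ = _ := by ring

theorem optimal_compressor_minimizes_bennett (xmax : ℝ) (hxmax : 0 < xmax)
    (p : ℝ → ℝ) (hpcont : ContinuousOn p (Set.Icc 0 xmax))
    (hpnn : ∀ x ∈ Set.Icc (0:ℝ) xmax, 0 ≤ p x)
    (c c' : ℝ → ℝ)
    (hmap : Set.MapsTo c (Set.Icc 0 xmax) (Set.Icc 0 xmax))
    (hderiv : ∀ x ∈ Set.Icc (0:ℝ) xmax, HasDerivAt c (c' x) x)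
    (hc'cont : ContinuousOn c' (Set.Icc 0 xmax))
    (hc'pos : ∀ x ∈ Set.Icc (0:ℝ) xmax, 0 < c' x)
    (hc0 : c 0 = 0) (hcmax : c xmax = xmax) :
    (∫ x in (0:ℝ)..xmax, p x / (c' x) ^ 2) ≥
        (1 / xmax ^ 2) * (∫ x in (0:ℝ)..xmax, (p x) ^ ((1:ℝ)/3)) ^ 3 ∧
    ∀ N : ℕ, 0 < N →
      (xmax ^ 2 / (3 * (N:ℝ) ^ 2)) * (2 * ∫ x in (0:ℝ)..xmax, p x / (c' x) ^ 2) ≥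
        (2 / (3 * (N:ℝ) ^ 2)) * (∫ x in (0:ℝ)..xmax, (p x) ^ ((1:ℝ)/3)) ^ 3 :=
  optimal_compressor_minimizes_bennett_general xmax hxmax p hpcont hpnn c c' hderiv hc'cont hc'pos
    hc0 hcmax
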